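/- For bounded linear operators A, B, C, D on a complex Hilbert space H, w([[A, B],[C, D]]) ≤ (w(A) + w(D) + √((w(A) − w(D))² + (‖B‖ + ‖C‖)²))/2. -/

import Mathlib

/-- The numerical radius of a bounded linear operator on a complex Hilbert space:
`w(T) = sup {|⟨Tx, x⟩| : ‖x‖ = 1}`. -/
noncomputable def numRad {H : Type*} [NormedAddCommGroup H] [InnerProductSpace ℂ H]
    (T : H →L[ℂ] H) : ℝ :=
  sSup {r : ℝ | ∃ x : H, ‖x‖ = 1 ∧ r = ‖(inner ℂ (T x) x : ℂ)‖}

/-- The absolute value `|T| = (T*T)^{1/2}` of a bounded operator. -/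
noncomputable def absOp {H : Type*} [NormedAddCommGroup H] [InnerProductSpace ℂ H]
    [CompleteSpace H] (T : H →L[ℂ] H) : H →L[ℂ] H :=
  CFC.sqrt (ContinuousLinearMap.adjoint T * T)

/-- The numerical radius of a complex `n × n` matrix. -/
noncomputable def numRadMat {n : ℕ} (M : Matrix (Fin n) (Fin n) ℂ) : ℝ :=
  numRad (Matrix.toEuclideanCLM (𝕜 := ℂ) M)

/-!
Split a unit vector of `H ⊕ H` as `x = (x₀, x₁)`, so `s = ‖x₀‖` and `t = ‖x₁‖` satisfy
`s² + t² = 1`. Expanding `⟪T x, x⟫` into its four block terms and estimating the diagonal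
ones by numerical radii and the off-diagonal ones by operator norms gives
`|⟪T x, x⟫| ≤ w(A) s² + w(D) t² + (‖B‖ + ‖C‖) s t`. The right-hand side is the quadratic form
of the real symmetric matrix `[[w(A), β/2], [β/2, w(D)]]`, `β = ‖B‖ + ‖C‖`, at the unit vector
`(s, t)`, hence at most its largest eigenvalue, which is the claimed bound.
-/

lemma mul_sq_add_mul_sq_add_mul_mul_le {α δ β s t : ℝ} (hst : s ^ 2 + t ^ 2 = 1) :
    α * s ^ 2 + δ * t ^ 2 + β * (s * t) ≤ (α + δ + √((α - δ) ^ 2 + β ^ 2)) / 2 := by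
  set X := (α - δ) * (s ^ 2 - t ^ 2) + β * (2 * s * t)
  have hunit : (s ^ 2 - t ^ 2) ^ 2 + (2 * s * t) ^ 2 = 1 := by
    linear_combination (s ^ 2 + t ^ 2 + 1) * hst
  -- Cauchy–Schwarz in `ℝ²`, via Lagrange's identity
  have hX : X ^ 2 ≤ (α - δ) ^ 2 + β ^ 2 := by
    nlinarith [sq_nonneg ((α - δ) * (2 * s * t) - β * (s ^ 2 - t ^ 2))]
  have hform : α * s ^ 2 + δ * t ^ 2 + β * (s * t) = ((α + δ) * (s ^ 2 + t ^ 2) + X) / 2 := by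
    ring
  rw [hform, hst, mul_one]
  linarith [(le_abs_self X).trans (Real.abs_le_sqrt hX)]

section NumericalRadius

variable {H : Type*} [NormedAddCommGroup H] [InnerProductSpace ℂ H]

lemma numRad_nonneg (T : H →L[ℂ] H) : 0 ≤ numRad T :=
  Real.sSup_nonneg (by rintro r ⟨x, -, rfl⟩; positivity)

lemma numRad_le {T : H →L[ℂ] H} {c : ℝ} (hc : 0 ≤ c)
    (h : ∀ x : H, ‖x‖ = 1 → ‖(inner ℂ (T x) x : ℂ)‖ ≤ c) : numRad T ≤ c :=
  Real.sSup_le (by rintro r ⟨x, hx, rfl⟩; exact h x hx) hc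

lemma norm_inner_apply_le_opNorm_mul (T : H →L[ℂ] H) (x y : H) :
    ‖(inner ℂ (T x) y : ℂ)‖ ≤ ‖T‖ * (‖x‖ * ‖y‖) :=
  calc ‖(inner ℂ (T x) y : ℂ)‖ ≤ ‖T x‖ * ‖y‖ := norm_inner_le_norm _ _
    _ ≤ ‖T‖ * ‖x‖ * ‖y‖ := by gcongr; exact T.le_opNorm x
    _ = ‖T‖ * (‖x‖ * ‖y‖) := mul_assoc _ _ _

lemma norm_inner_apply_self_le_numRad_of_norm_eq_one (T : H →L[ℂ] H) {x : H} (hx : ‖x‖ = 1) :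
    ‖(inner ℂ (T x) x : ℂ)‖ ≤ numRad T :=
  le_csSup ⟨‖T‖, by
    rintro r ⟨y, hy, rfl⟩
    simpa [hy] using norm_inner_apply_le_opNorm_mul T y y⟩ ⟨x, hx, rfl⟩

lemma norm_inner_apply_smul_self (T : H →L[ℂ] H) (c : ℂ) (x : H) :
    ‖(inner ℂ (T (c • x)) (c • x) : ℂ)‖ = ‖c‖ ^ 2 * ‖(inner ℂ (T x) x : ℂ)‖ := by
  rw [map_smul, inner_smul_left, inner_smul_right, norm_mul, norm_mul, RCLike.norm_conj]
  ring

lemma norm_inner_apply_self_le_numRad_mul_sq (T : H →L[ℂ] H) (x : H) :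
    ‖(inner ℂ (T x) x : ℂ)‖ ≤ numRad T * ‖x‖ ^ 2 := by
  rcases eq_or_ne x 0 with rfl | hx
  · simp
  set u := (‖x‖⁻¹ : ℂ) • x
  have hxu : x = (‖x‖ : ℂ) • u := by simp [u, smul_smul, hx]
  calc ‖(inner ℂ (T x) x : ℂ)‖ = ‖x‖ ^ 2 * ‖(inner ℂ (T u) u : ℂ)‖ := by
        conv_lhs => rw [hxu]
        rw [norm_inner_apply_smul_self, Complex.norm_real, norm_norm]
    _ ≤ ‖x‖ ^ 2 * numRad T := by
        gcongr
        exact norm_inner_apply_self_le_numRad_of_norm_eq_one T (norm_smul_inv_norm hx)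
    _ = numRad T * ‖x‖ ^ 2 := mul_comm _ _

end NumericalRadius

section BlockOperator

variable {H : Type*} [NormedAddCommGroup H] [InnerProductSpace ℂ H]
  {A B C D : H →L[ℂ] H} {T : PiLp 2 (fun _ : Fin 2 => H) →L[ℂ] PiLp 2 (fun _ : Fin 2 => H)}

lemma inner_block_apply_self
    (hT : ∀ x, T x 0 = A (x 0) + B (x 1) ∧ T x 1 = C (x 0) + D (x 1))
    (x : PiLp 2 (fun _ : Fin 2 => H)) :
    (inner ℂ (T x) x : ℂ) = inner ℂ (A (x 0)) (x 0) + inner ℂ (B (x 1)) (x 0)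
      + inner ℂ (C (x 0)) (x 1) + inner ℂ (D (x 1)) (x 1) := by
  rw [PiLp.inner_apply, Fin.sum_univ_two, (hT x).1, (hT x).2, inner_add_left, inner_add_left,
    ← add_assoc]

lemma norm_inner_block_apply_self_le
    (hT : ∀ x, T x 0 = A (x 0) + B (x 1) ∧ T x 1 = C (x 0) + D (x 1))
    (x : PiLp 2 (fun _ : Fin 2 => H)) :
    ‖(inner ℂ (T x) x : ℂ)‖ ≤ numRad A * ‖x 0‖ ^ 2 + numRad D * ‖x 1‖ ^ 2
      + (‖B‖ + ‖C‖) * (‖x 0‖ * ‖x 1‖) := by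
  have hA := norm_inner_apply_self_le_numRad_mul_sq A (x 0)
  have hB := norm_inner_apply_le_opNorm_mul B (x 1) (x 0)
  have hC := norm_inner_apply_le_opNorm_mul C (x 0) (x 1)
  have hD := norm_inner_apply_self_le_numRad_mul_sq D (x 1)
  rw [inner_block_apply_self hT]
  refine (norm_add₄_le (E := ℂ)).trans ?_
  nlinarith

end BlockOperator

open ContinuousLinearMap
theorem stmt10_general {H : Type*} [NormedAddCommGroup H] [InnerProductSpace ℂ H]
    (A B C D : H →L[ℂ] H)
    (T : PiLp 2 (fun _ : Fin 2 => H) →L[ℂ] PiLp 2 (fun _ : Fin 2 => H))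
    (hT : ∀ x : PiLp 2 (fun _ : Fin 2 => H),
      T x 0 = A (x 0) + B (x 1) ∧ T x 1 = C (x 0) + D (x 1)) :
    numRad T ≤ (numRad A + numRad D +
      Real.sqrt ((numRad A - numRad D) ^ 2 + (‖B‖ + ‖C‖) ^ 2)) / 2 := by
  have hbound_nonneg := div_nonneg (add_nonneg (add_nonneg (numRad_nonneg A) (numRad_nonneg D))
    (Real.sqrt_nonneg ((numRad A - numRad D) ^ 2 + (‖B‖ + ‖C‖) ^ 2))) zero_le_two
  refine numRad_le hbound_nonneg fun x hx => ?_
  have hsplit : ‖x 0‖ ^ 2 + ‖x 1‖ ^ 2 = 1 := by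
    simpa [hx, Fin.sum_univ_two] using (PiLp.norm_sq_eq_of_L2 (fun _ : Fin 2 => H) x).symm
  calc ‖(inner ℂ (T x) x : ℂ)‖
      ≤ numRad A * ‖x 0‖ ^ 2 + numRad D * ‖x 1‖ ^ 2 + (‖B‖ + ‖C‖) * (‖x 0‖ * ‖x 1‖) :=
        norm_inner_block_apply_self_le hT x
    _ ≤ _ := mul_sq_add_mul_sq_add_mul_mul_le hsplit

theorem stmt10 {H : Type*} [NormedAddCommGroup H] [InnerProductSpace ℂ H] [CompleteSpace H]
    (A B C D : H →L[ℂ] H)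
    (T : PiLp 2 (fun _ : Fin 2 => H) →L[ℂ] PiLp 2 (fun _ : Fin 2 => H))
    (hT : ∀ x : PiLp 2 (fun _ : Fin 2 => H),
      T x 0 = A (x 0) + B (x 1) ∧ T x 1 = C (x 0) + D (x 1)) :
    numRad T ≤ (numRad A + numRad D +
      Real.sqrt ((numRad A - numRad D) ^ 2 + (‖B‖ + ‖C‖) ^ 2)) / 2 :=
  stmt10_general A B C D T hT
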